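/- The T_δ-test returns no false positives: if the test classifies a single-via path P_{svt} as locally optimal, and the test's shortest path queries covered every T-significant subpath of P_{svt} containing v in its interior (each such subpath being contained in some queried subpath confirmed to be a shortest path), then P_{svt} is genuinely T-locally optimal. -/

import Mathlib

/-!
A `T`-significant subpath `Q` of `P_svt` either has `v` in its interior, and then it lies in a
queried subpath confirmed to be shortest, or it does not, and then it lies in `P_sv` or in `P_vt`.
Either way it is a subpath of a shortest path, hence itself shortest: for a shortest path split
at a vertex `x`, the lower bound `d ≤ pLen` on both pieces and the triangle inequality through `x`
squeeze the total length, forcing both pieces to be shortest.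
-/

open List

variable {V : Type*}

/-- Length (cost) of a path given as a list of vertices, with edge weights `c`. -/
def pLen (c : V → V → ℝ) : List V → ℝ
  | [] => 0
  | [_] => 0
  | a :: b :: rest => c a b + pLen c (b :: rest)

/-- The pInterior of a path: the path with its two endpoints removed. -/
def pInterior (p : List V) : List V := (p.drop 1).dropLast

/-- A (nonempty) path is a shortest path if its length equals the shortest-path
distance `d` between its endpoints. -/
def IsShortestPath [Inhabited V] (c d : V → V → ℝ) (p : List V) : Prop :=
  p ≠ [] ∧ pLen c p = d p.headI p.getLastI

/-- A path is `T`-locally optimal if every `T`-significant subpath (a nonempty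
infix whose pInterior has length `< T`) is a shortest path. -/
def TLocOpt [Inhabited V] (c d : V → V → ℝ) (T : ℝ) (p : List V) : Prop :=
  ∀ q : List V, q ≠ [] → q <:+: p → pLen c (pInterior q) < T → IsShortestPath c d q

theorem pLen_append_cons (c : V → V → ℝ) (x : V) (r : List V) : ∀ l : List V,
    pLen c (l ++ x :: r) = pLen c (l ++ [x]) + pLen c (x :: r)
  | [] => by simp [pLen]
  | [a] => by simp [pLen]
  | a :: b :: l => by
    have ih := pLen_append_cons c x r (b :: l)
    simp only [cons_append] at ih
    simp only [cons_append, pLen, ih]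
    ring

theorem headI_append_cons [Inhabited V] (l r : List V) (x : V) :
    (l ++ x :: r).headI = (l ++ [x]).headI := by
  cases l <;> rfl

theorem getLastI_append_cons [Inhabited V] (l r : List V) (x : V) :
    (l ++ x :: r).getLastI = (x :: r).getLastI := by
  simp only [getLastI_eq_getLast?_getD, getLast?_append_of_ne_nil _ (cons_ne_nil x r)]

theorem eq_headI_cons_tail [Inhabited V] {p : List V} (hp : p ≠ []) : p = p.headI :: p.tail := by
  obtain ⟨a, p, rfl⟩ := exists_cons_of_ne_nil hp
  rfl

theorem eq_dropLast_append_getLastI [Inhabited V] {p : List V} (hp : p ≠ []) :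
    p = p.dropLast ++ [p.getLastI] := by
  rw [getLastI_eq_getLast?_getD, getLast?_eq_some_getLast hp, Option.getD_some,
    dropLast_append_getLast]

theorem mem_pInterior_append_cons {l r : List V} (hl : l ≠ []) (hr : r ≠ []) (x : V) :
    x ∈ pInterior (l ++ x :: r) := by
  obtain ⟨a, l, rfl⟩ := exists_cons_of_ne_nil hl
  simp [pInterior, dropLast_append_of_ne_nil, dropLast_cons_of_ne_nil hr]

section ShortestPaths

variable [Inhabited V] {c d : V → V → ℝ}
  (hlow : ∀ p : List V, p ≠ [] → d p.headI p.getLastI ≤ pLen c p)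
  (htri : ∀ a b e : V, d a e ≤ d a b + d b e)
include hlow htri

theorem IsShortestPath.split {l r : List V} {x : V} (h : IsShortestPath c d (l ++ x :: r)) :
    IsShortestPath c d (l ++ [x]) ∧ IsShortestPath c d (x :: r) := by
  have hlen := h.2
  rw [pLen_append_cons, headI_append_cons, getLastI_append_cons] at hlen
  have hl := hlow (l ++ [x]) (by simp)
  have hr := hlow (x :: r) (by simp)
  have hx := htri (l ++ [x]).headI x (x :: r).getLastI
  have hlast : (l ++ [x]).getLastI = x := by simp [getLastI_eq_getLast?_getD]
  rw [hlast] at hl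
  rw [headI_cons] at hr
  exact ⟨⟨by simp, by rw [hlast]; linarith⟩, ⟨by simp, by rw [headI_cons]; linarith⟩⟩

theorem IsShortestPath.of_prefix {Q R : List V} (hR : IsShortestPath c d R) (hQ : Q ≠ [])
    (h : Q <+: R) : IsShortestPath c d Q := by
  obtain ⟨r, rfl⟩ := h
  rw [← dropLast_append_getLast hQ] at hR ⊢
  rw [append_assoc, singleton_append] at hR
  exact (hR.split hlow htri).1

theorem IsShortestPath.of_suffix {Q R : List V} (hR : IsShortestPath c d R) (hQ : Q ≠ [])
    (h : Q <:+ R) : IsShortestPath c d Q := by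
  obtain ⟨l, rfl⟩ := h
  obtain ⟨x, r, rfl⟩ := exists_cons_of_ne_nil hQ
  exact (hR.split hlow htri).2

theorem IsShortestPath.of_infix {Q R : List V} (hR : IsShortestPath c d R) (hQ : Q ≠ [])
    (h : Q <:+: R) : IsShortestPath c d Q := by
  obtain ⟨S, hQS, hSR⟩ := infix_iff_prefix_suffix.mp h
  have hS : S ≠ [] := by
    rintro rfl
    exact hQ (prefix_nil.mp hQS)
  exact (hR.of_suffix hlow htri hS hSR).of_prefix hlow htri hQ hQS

end ShortestPaths

theorem infix_or_infix_of_not_mem_pInterior {Q A B : List V} {v : V}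
    (h : Q <:+: (A ++ [v]) ++ B) (hv : v ∉ pInterior Q) :
    Q <:+: A ++ [v] ∨ Q <:+: v :: B := by
  rcases infix_append_iff_ne_nil.mp h with h | h | ⟨Q₁, Q₂, hQ₁, hQ₂, rfl, hQ₁A, hQ₂B⟩
  · exact .inl h
  · exact .inr (infix_cons h)
  · obtain ⟨t, rfl, -⟩ := (suffix_concat_iff.mp hQ₁A).resolve_left hQ₁
    rcases eq_or_ne t [] with rfl | ht
    · exact .inr (prefix_cons_inj v |>.mpr hQ₂B).isInfix
    · rw [append_assoc, singleton_append] at hv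
      exact absurd (mem_pInterior_append_cons ht hQ₂ v) hv

theorem stmt12_general [Inhabited V] (c d : V → V → ℝ)
    (hlow : ∀ p : List V, p ≠ [] → d p.headI p.getLastI ≤ pLen c p)
    (htri : ∀ a b e : V, d a e ≤ d a b + d b e)
    (v : V) (T : ℝ) (p1 p2 : List V)
    (h1 : IsShortestPath c d p1) (h1l : p1.getLastI = v)
    (h2 : IsShortestPath c d p2) (h2h : p2.headI = v)
    (P : List V) (hP : P = p1 ++ p2.tail)
    (hcover : ∀ Q : List V, Q ≠ [] → Q <:+: P → pLen c (pInterior Q) < T →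
      v ∈ pInterior Q →
      ∃ R : List V, R ≠ [] ∧ Q <:+: R ∧ R <:+: P ∧ IsShortestPath c d R) :
    TLocOpt c d T P := by
  intro Q hQ hQP hQT
  by_cases hv : v ∈ pInterior Q
  · obtain ⟨R, -, hQR, -, hR⟩ := hcover Q hQ hQP hQT hv
    exact hR.of_infix hlow htri hQ hQR
  have hp1 : p1 = p1.dropLast ++ [v] := h1l ▸ eq_dropLast_append_getLastI h1.1
  have hp2 : p2 = v :: p2.tail := h2h ▸ eq_headI_cons_tail h2.1
  rw [hP, hp1] at hQP
  rcases infix_or_infix_of_not_mem_pInterior hQP hv with h | h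
  · exact h1.of_infix hlow htri hQ (hp1 ▸ h)
  · exact h2.of_infix hlow htri hQ (hp2 ▸ h)

/-- The `T_δ`-test returns no false positives: if every
`T`-significant subpath of the via path `P = P_sv ++ (P_vt).tail` containing
`v` in its pInterior is contained in some queried subpath of `P` confirmed to
be a shortest path, then `P` is genuinely `T`-locally optimal. -/
theorem stmt12 [Inhabited V] (c d : V → V → ℝ) (hc : ∀ a b, 0 ≤ c a b)
    (hlow : ∀ p : List V, p ≠ [] → d p.headI p.getLastI ≤ pLen c p)
    (htri : ∀ a b e : V, d a e ≤ d a b + d b e)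
    (s v t : V) (T : ℝ) (p1 p2 : List V)
    (h1 : IsShortestPath c d p1) (h1h : p1.headI = s) (h1l : p1.getLastI = v)
    (h2 : IsShortestPath c d p2) (h2h : p2.headI = v) (h2l : p2.getLastI = t)
    (P : List V) (hP : P = p1 ++ p2.tail)
    (hcover : ∀ Q : List V, Q ≠ [] → Q <:+: P → pLen c (pInterior Q) < T →
      v ∈ pInterior Q →
      ∃ R : List V, R ≠ [] ∧ Q <:+: R ∧ R <:+: P ∧ IsShortestPath c d R) :
    TLocOpt c d T P :=
  stmt12_general c d hlow htri v T p1 p2 h1 h1l h2 h2h P hP hcover
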